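/- arXiv:math/0202219 — 2 statements merged into one kernel-verified Lean document; each statement's English description precedes it below -/
import Mathlib

section
/- For each nonnegative integer r, the number of permutations of {1,...,n} avoiding 12-3 and containing exactly r occurrences of 13-2 equals the number of permutations of {1,...,n} avoiding 21-3 and containing exactly r occurrences of 13-2, for every n. -/
/-- The value of the permutation at position `i` (0-indexed), or 0 if out of range. -/
def permVal {n : ℕ} (π : Equiv.Perm (Fin n)) (i : ℕ) : ℕ :=
  if h : i < n then (π ⟨i, h⟩ : ℕ) else 0

/-- Number of occurrences of the generalized pattern 12-3. -/
def occ12_3 {n : ℕ} (π : Equiv.Perm (Fin n)) : ℕ :=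
  ((Finset.range n ×ˢ Finset.range n).filter (fun p =>
    p.1 + 1 < p.2 ∧ permVal π p.1 < permVal π (p.1 + 1) ∧
      permVal π (p.1 + 1) < permVal π p.2)).card

/-- Number of occurrences of the generalized pattern 13-2. -/
def occ13_2 {n : ℕ} (π : Equiv.Perm (Fin n)) : ℕ :=
  ((Finset.range n ×ˢ Finset.range n).filter (fun p =>
    p.1 + 1 < p.2 ∧ permVal π p.1 < permVal π p.2 ∧
      permVal π p.2 < permVal π (p.1 + 1))).card

/-- Number of occurrences of the generalized pattern 21-3. -/
def occ21_3 {n : ℕ} (π : Equiv.Perm (Fin n)) : ℕ :=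
  ((Finset.range n ×ˢ Finset.range n).filter (fun p =>
    p.1 + 1 < p.2 ∧ permVal π (p.1 + 1) < permVal π p.1 ∧
      permVal π p.1 < permVal π p.2)).card

/-- Number of occurrences of the generalized pattern 23-1. -/
def occ23_1 {n : ℕ} (π : Equiv.Perm (Fin n)) : ℕ :=
  ((Finset.range n ×ˢ Finset.range n).filter (fun p =>
    p.1 + 1 < p.2 ∧ permVal π p.2 < permVal π p.1 ∧
      permVal π p.1 < permVal π (p.1 + 1))).card

/-- Number of occurrences of the generalized pattern 31-2. -/
def occ31_2 {n : ℕ} (π : Equiv.Perm (Fin n)) : ℕ :=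
  ((Finset.range n ×ˢ Finset.range n).filter (fun p =>
    p.1 + 1 < p.2 ∧ permVal π (p.1 + 1) < permVal π p.2 ∧
      permVal π p.2 < permVal π p.1)).card

/-- Number of occurrences of the generalized pattern 32-1. -/
def occ32_1 {n : ℕ} (π : Equiv.Perm (Fin n)) : ℕ :=
  ((Finset.range n ×ˢ Finset.range n).filter (fun p =>
    p.1 + 1 < p.2 ∧ permVal π p.2 < permVal π (p.1 + 1) ∧
      permVal π (p.1 + 1) < permVal π p.1)).card

open scoped Classical

namespace Stmt17
set_option linter.unusedSectionVars false

variable {n : ℕ}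

lemma permVal_lt (π : Equiv.Perm (Fin n)) {i : ℕ} (h : i < n) : permVal π i < n := by
  simp only [permVal, dif_pos h]; exact (π ⟨i, h⟩).isLt

lemma permVal_inj (π : Equiv.Perm (Fin n)) {i j : ℕ} (hi : i < n) (hj : j < n)
    (h : permVal π i = permVal π j) : i = j := by
  simp only [permVal, dif_pos hi, dif_pos hj] at h
  have := π.injective (Fin.val_injective h)
  exact congrArg Fin.val this

/-- `p` is a right-to-left maximum position. -/
def Rs (π : Equiv.Perm (Fin n)) (p : ℕ) : Prop :=
  ∀ j, j < n → p < j → permVal π j < permVal π p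

lemma not_Rs_iff (π : Equiv.Perm (Fin n)) {p : ℕ} (hp : p < n) :
    ¬ Rs π p ↔ ∃ j, j < n ∧ p < j ∧ permVal π p < permVal π j := by
  constructor
  · intro h
    simp only [Rs, not_forall] at h
    obtain ⟨j, hj, hpj, hlt⟩ := h
    refine ⟨j, hj, hpj, ?_⟩
    rcases lt_trichotomy (permVal π p) (permVal π j) with h' | h' | h'
    · exact h'
    · exact absurd (permVal_inj π hp hj h') (by omega)
    · exact absurd h' hlt
  · rintro ⟨j, hj, hpj, hlt⟩ h
    exact absurd hlt (not_lt.mpr (le_of_lt (h j hj hpj)))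

lemma Rs_last (π : Equiv.Perm (Fin n)) (hn : 0 < n) : Rs π (n - 1) := by
  intro j hj hpj; omega

/-- first R position strictly after p -/
noncomputable def qb (π : Equiv.Perm (Fin n)) (p : ℕ) : ℕ :=
  sInf {j | j < n ∧ p < j ∧ Rs π j}

/-- start of the block of p -/
noncomputable def ab (π : Equiv.Perm (Fin n)) (p : ℕ) : ℕ :=
  sInf {a | ∀ t, a ≤ t → t ≤ p → ¬ Rs π t}

section blockfacts

variable (π : Equiv.Perm (Fin n)) {p : ℕ} (hp : p < n) (hR : ¬ Rs π p)

include hp hR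

lemma qb_spec : p < qb π p ∧ qb π p < n ∧ Rs π (qb π p) := by
  have hne : {j | j < n ∧ p < j ∧ Rs π j}.Nonempty := by
    refine ⟨n - 1, ?_, ?_, Rs_last π (by omega)⟩ <;> try omega
    · -- p < n - 1
      obtain ⟨j, hj, hpj, _⟩ := (not_Rs_iff π hp).mp hR
      omega
  have := Nat.sInf_mem hne
  exact ⟨this.2.1, this.1, this.2.2⟩

lemma qb_min {t : ℕ} (h1 : p < t) (h2 : t < qb π p) : ¬ Rs π t := by
  intro hRt
  have hq := qb_spec π hp hR
  have : t ∉ {j | j < n ∧ p < j ∧ Rs π j} := Nat.notMem_of_lt_sInf h2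
  exact this ⟨by omega, h1, hRt⟩

lemma ab_le : ab π p ≤ p := by
  apply Nat.sInf_le
  intro t h1 h2
  have : t = p := le_antisymm h2 h1
  rwa [this]

lemma ab_spec {t : ℕ} (h1 : ab π p ≤ t) (h2 : t ≤ p) : ¬ Rs π t := by
  have hne : {a | ∀ t, a ≤ t → t ≤ p → ¬ Rs π t}.Nonempty :=
    ⟨p, fun t ht1 ht2 => by rwa [le_antisymm ht2 ht1]⟩
  exact Nat.sInf_mem hne t h1 h2

lemma ab_pred (h : 0 < ab π p) : Rs π (ab π p - 1) := by
  have hlt : ab π p - 1 < ab π p := by omega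
  have : ab π p - 1 ∉ {a | ∀ t, a ≤ t → t ≤ p → ¬ Rs π t} :=
    Nat.notMem_of_lt_sInf hlt
  simp only [Set.mem_setOf_eq, not_forall] at this
  obtain ⟨t, h1, h2, h3⟩ := this
  rw [not_not] at h3
  have ht : t = ab π p - 1 := by
    by_contra hne
    exact ab_spec π hp hR (by omega) h2 h3
  rwa [ht] at h3

/-- every position in the block [ab p, qb p) is non-R -/
lemma block_free {t : ℕ} (h1 : ab π p ≤ t) (h2 : t < qb π p) : ¬ Rs π t := by
  rcases le_or_gt t p with h | h
  · exact ab_spec π hp hR h1 h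
  · exact qb_min π hp hR h h2

end blockfacts

section stability

variable (π : Equiv.Perm (Fin n)) {p t : ℕ} (hp : p < n) (hR : ¬ Rs π p)
  (h1 : ab π p ≤ t) (h2 : t < qb π p)

include hp hR h1 h2

lemma t_lt_n : t < n := by have := (qb_spec π hp hR).2.1; omega

lemma qb_stable : qb π t = qb π p := by
  obtain ⟨hq1, hq2, hq3⟩ := qb_spec π hp hR
  apply le_antisymm
  · exact Nat.sInf_le ⟨hq2, h2, hq3⟩
  · by_contra hlt
    push_neg at hlt
    have hne : {j | j < n ∧ t < j ∧ Rs π j}.Nonempty := ⟨qb π p, hq2, h2, hq3⟩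
    have hmem := Nat.sInf_mem hne
    have hqt := hmem.2.2
    have hta : ab π p ≤ qb π t := le_trans h1 (le_of_lt hmem.2.1)
    exact block_free π hp hR hta hlt hqt

lemma ab_stable : ab π t = ab π p := by
  apply le_antisymm
  · apply Nat.sInf_le
    intro s hs1 hs2
    exact block_free π hp hR hs1 (by omega)
  · by_contra hlt
    push_neg at hlt
    have habt : ∀ s, ab π t ≤ s → s ≤ t → ¬ Rs π s := by
      have hne : {a | ∀ s, a ≤ s → s ≤ t → ¬ Rs π s}.Nonempty :=
        ⟨t, fun s hs1 hs2 => by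
          rw [le_antisymm hs2 hs1]; exact block_free π hp hR h1 h2⟩
      exact Nat.sInf_mem hne
    have hpos : 0 < ab π p := by omega
    have hRa := ab_pred π hp hR hpos
    exact habt (ab π p - 1) (by omega) (by omega) hRa

end stability

noncomputable def rho (π : Equiv.Perm (Fin n)) (p : ℕ) : ℕ :=
  if p < n ∧ ¬ Rs π p then ab π p + (qb π p - 1) - p else p

section rhofacts

variable (π : Equiv.Perm (Fin n))

lemma rho_of_block {p : ℕ} (hp : p < n) (hR : ¬ Rs π p) :
    rho π p = ab π p + (qb π p - 1) - p := by
  simp [rho, hp, hR]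

lemma rho_of_not {p : ℕ} (h : ¬ (p < n ∧ ¬ Rs π p)) : rho π p = p := by
  simp only [rho, if_neg h]

lemma rho_lt {p : ℕ} (hp : p < n) : rho π p < n := by
  by_cases h : p < n ∧ ¬ Rs π p
  · rw [rho_of_block π h.1 h.2]
    have := qb_spec π h.1 h.2
    have := ab_le π h.1 h.2
    omega
  · rw [rho_of_not π h]; exact hp

lemma rho_mem_block {p : ℕ} (hp : p < n) (hR : ¬ Rs π p) :
    ab π p ≤ rho π p ∧ rho π p < qb π p := by
  rw [rho_of_block π hp hR]
  have := qb_spec π hp hR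
  have := ab_le π hp hR
  omega

lemma rho_invol (p : ℕ) : rho π (rho π p) = p := by
  by_cases h : p < n ∧ ¬ Rs π p
  · obtain ⟨hp, hR⟩ := h
    obtain ⟨ha, hq⟩ := rho_mem_block π hp hR
    have hRr : ¬ Rs π (rho π p) := block_free π hp hR ha hq
    have hrn : rho π p < n := rho_lt π hp
    have hqs : qb π (rho π p) = qb π p := qb_stable π hp hR ha hq
    have has : ab π (rho π p) = ab π p := ab_stable π hp hR ha hq
    rw [rho_of_block π hrn hRr, hqs, has, rho_of_block π hp hR]
    have := qb_spec π hp hR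
    have := ab_le π hp hR
    omega
  · rw [rho_of_not π h, rho_of_not π h]

noncomputable def rhoFin (π : Equiv.Perm (Fin n)) : Fin n → Fin n :=
  fun p => ⟨rho π p.1, rho_lt π p.2⟩

lemma rhoFin_invol : Function.Involutive (rhoFin π) := by
  intro p
  apply Fin.ext
  exact rho_invol π p.1

noncomputable def phi (π : Equiv.Perm (Fin n)) : Equiv.Perm (Fin n) :=
  ((rhoFin_invol π).toPerm).trans π

lemma permVal_phi {t : ℕ} (ht : t < n) :
    permVal (phi π) t = permVal π (rho π t) := by
  have hrt : rho π t < n := rho_lt π ht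
  simp only [permVal, dif_pos ht, dif_pos hrt, phi, Equiv.trans_apply]
  rfl

end rhofacts

section keylemmas

variable (π : Equiv.Perm (Fin n))

/-- The value at a non-R position is less than the value at the next R position. -/
lemma lt_qb_val : ∀ m p, qb π p - p ≤ m → p < n → ¬ Rs π p →
    permVal π p < permVal π (qb π p) := by
  intro m
  induction m with
  | zero =>
    intro p hm hp hR
    have := (qb_spec π hp hR).1
    omega
  | succ m ih =>
    intro p hm hp hR
    obtain ⟨hq1, hq2, hq3⟩ := qb_spec π hp hR
    obtain ⟨j, hj, hpj, hlt⟩ := (not_Rs_iff π hp).mp hR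
    rcases lt_trichotomy j (qb π p) with h | h | h
    · have hRj : ¬ Rs π j := qb_min π hp hR hpj h
      have hqs : qb π j = qb π p := qb_stable π hp hR (le_trans (ab_le π hp hR) (le_of_lt hpj)) h
      have := ih j (by omega) (by omega) hRj
      rw [hqs] at this
      omega
    · rwa [h] at hlt
    · have := hq3 j hj h
      omega

lemma blockLtQ {p : ℕ} (hp : p < n) (hR : ¬ Rs π p) :
    permVal π p < permVal π (qb π p) :=
  lt_qb_val π (qb π p - p) p le_rfl hp hR

/-- rho fixes R positions -/
lemma rho_of_Rs {p : ℕ} (hR : Rs π p) : rho π p = p :=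
  rho_of_not π (by tauto)

/-- key: applying phi does not change the set of R positions. -/
lemma Rs_phi {p : ℕ} (hp : p < n) : Rs (phi π) p ↔ Rs π p := by
  constructor
  · -- contrapositive
    intro hRφ
    by_contra hR
    obtain ⟨hq1, hq2, hq3⟩ := qb_spec π hp hR
    obtain ⟨ha, hq⟩ := rho_mem_block π hp hR
    have hRr : ¬ Rs π (rho π p) := block_free π hp hR ha hq
    have hrn : rho π p < n := rho_lt π hp
    have hqs : qb π (rho π p) = qb π p := qb_stable π hp hR ha hq
    have h1 : permVal π (rho π p) < permVal π (qb π p) := by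
      have := blockLtQ π hrn hRr; rwa [hqs] at this
    have h2 : permVal (phi π) p = permVal π (rho π p) := permVal_phi π hp
    have h3 : permVal (phi π) (qb π p) = permVal π (qb π p) := by
      rw [permVal_phi π hq2, rho_of_Rs π hq3]
    have := hRφ (qb π p) hq2 hq1
    omega
  · intro hR j hj hpj
    have h2 : permVal (phi π) p = permVal π p := by
      rw [permVal_phi π hp, rho_of_not π (by tauto)]
    rw [h2, permVal_phi π hj]
    by_cases hRj : Rs π j
    · rw [rho_of_Rs π hRj]
      exact hR j hj hpj
    · apply hR (rho π j) (rho_lt π hj)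
      obtain ⟨ha, hq⟩ := rho_mem_block π hj hRj
      -- ab π j > p since p is an R position below j
      have : p < ab π j := by
        by_contra hle
        push_neg at hle
        exact ab_spec π hj hRj hle (le_of_lt hpj) hR
      omega

lemma qb_phi (p : ℕ) : qb (phi π) p = qb π p := by
  unfold qb
  congr 1
  ext j
  simp only [Set.mem_setOf_eq]
  constructor
  · rintro ⟨h1, h2, h3⟩; exact ⟨h1, h2, (Rs_phi π h1).mp h3⟩
  · rintro ⟨h1, h2, h3⟩; exact ⟨h1, h2, (Rs_phi π h1).mpr h3⟩

lemma ab_phi {p : ℕ} (hp : p < n) : ab (phi π) p = ab π p := by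
  unfold ab
  congr 1
  ext a
  simp only [Set.mem_setOf_eq]
  constructor
  · intro h t h1 h2; exact fun hRt => h t h1 h2 ((Rs_phi π (by omega)).mpr hRt)
  · intro h t h1 h2; exact fun hRt => h t h1 h2 ((Rs_phi π (by omega)).mp hRt)

lemma rho_phi (p : ℕ) : rho (phi π) p = rho π p := by
  by_cases hp : p < n
  · by_cases hR : Rs π p
    · rw [rho_of_Rs π hR, rho_of_Rs (phi π) ((Rs_phi π hp).mpr hR)]
    · rw [rho_of_block π hp hR,
        rho_of_block (phi π) hp (fun h => hR ((Rs_phi π hp).mp h)),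
        qb_phi π p, ab_phi π hp]
  · rw [rho_of_not π (by tauto), rho_of_not (phi π) (by tauto)]

lemma phi_invol : phi (phi π) = π := by
  apply Equiv.ext
  intro x
  have h1 : rhoFin (phi π) = rhoFin π := by
    funext p
    apply Fin.ext
    exact rho_phi π p.1
  show (phi π) ((Function.Involutive.toPerm _ _) x) = π x
  simp only [Function.Involutive.coe_toPerm]
  rw [h1]
  show π ((rhoFin π) ((rhoFin π) x)) = π x
  rw [rhoFin_invol π x]

end keylemmas

section avoidance

variable (π : Equiv.Perm (Fin n))

/-- blocks strictly decreasing -/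
def DecB (π : Equiv.Perm (Fin n)) : Prop :=
  ∀ p, p + 1 < n → ¬ Rs π p → ¬ Rs π (p+1) → permVal π (p+1) < permVal π p

/-- blocks strictly increasing -/
def IncB (π : Equiv.Perm (Fin n)) : Prop :=
  ∀ p, p + 1 < n → ¬ Rs π p → ¬ Rs π (p+1) → permVal π p < permVal π (p+1)

lemma occ12_3_zero_iff' : occ12_3 π = 0 ↔
    ∀ i j, i < n → j < n → ¬ (i + 1 < j ∧ permVal π i < permVal π (i+1) ∧
      permVal π (i+1) < permVal π j) := by
  rw [occ12_3, Finset.card_eq_zero, Finset.filter_eq_empty_iff]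
  constructor
  · intro h i j hi hj
    have hm : (i, j) ∈ Finset.range n ×ˢ Finset.range n := by simp [hi, hj]
    exact h hm
  · rintro h ⟨i, j⟩ hij
    simp only [Finset.mem_product, Finset.mem_range] at hij
    exact h i j hij.1 hij.2

lemma occ21_3_zero_iff' : occ21_3 π = 0 ↔
    ∀ i j, i < n → j < n → ¬ (i + 1 < j ∧ permVal π (i+1) < permVal π i ∧
      permVal π i < permVal π j) := by
  rw [occ21_3, Finset.card_eq_zero, Finset.filter_eq_empty_iff]
  constructor
  · intro h i j hi hj
    have hm : (i, j) ∈ Finset.range n ×ˢ Finset.range n := by simp [hi, hj]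
    exact h hm
  · rintro h ⟨i, j⟩ hij
    simp only [Finset.mem_product, Finset.mem_range] at hij
    exact h i j hij.1 hij.2

lemma occ12_3_zero_iff : occ12_3 π = 0 ↔ DecB π := by
  rw [occ12_3_zero_iff']
  constructor
  · intro h p hp hR hR1
    obtain ⟨j, hj, hpj, hlt⟩ := (not_Rs_iff π (by omega)).mp hR1
    by_contra hle
    push_neg at hle
    have hne : permVal π (p+1) ≠ permVal π p := fun he =>
      by have := permVal_inj π (by omega) (by omega) he; omega
    exact h p j (by omega) hj ⟨hpj, by omega, hlt⟩
  · rintro h i j hi hj ⟨h1, h2, h3⟩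
    have hR1 : ¬ Rs π (i+1) := by
      rw [not_Rs_iff π (by omega)]
      exact ⟨j, hj, h1, h3⟩
    have hR : ¬ Rs π i := by
      rw [not_Rs_iff π hi]
      exact ⟨i+1, by omega, by omega, h2⟩
    have := h i (by omega) hR hR1
    omega

lemma occ21_3_zero_iff : occ21_3 π = 0 ↔ IncB π := by
  rw [occ21_3_zero_iff']
  constructor
  · intro h p hp hR hR1
    obtain ⟨j, hj, hpj, hlt⟩ := (not_Rs_iff π (by omega)).mp hR
    by_contra hle
    push_neg at hle
    have hne : permVal π p ≠ permVal π (p+1) := fun he =>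
      by have := permVal_inj π (by omega) (by omega) he; omega
    have hj2 : p + 1 < j := by
      rcases Nat.lt_or_ge (p+1) j with h' | h'
      · exact h'
      · have : j = p + 1 := by omega
        subst this; omega
    exact h p j (by omega) hj ⟨hj2, by omega, hlt⟩
  · rintro h i j hi hj ⟨h1, h2, h3⟩
    have hR : ¬ Rs π i := by
      rw [not_Rs_iff π hi]
      exact ⟨j, hj, by omega, h3⟩
    have hR1 : ¬ Rs π (i+1) := by
      rw [not_Rs_iff π (by omega)]
      exact ⟨j, hj, h1, by omega⟩
    have := h i (by omega) hR hR1
    omega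

lemma dec_mono (hA : DecB π) {p s t : ℕ} (hp : p < n) (hR : ¬ Rs π p)
    (hs : ab π p ≤ s) (hst : s ≤ t) (ht : t < qb π p) :
    permVal π t ≤ permVal π s := by
  induction t with
  | zero => have : s = 0 := by omega
            rw [this]
  | succ t ih =>
    rcases Nat.lt_or_ge s (t+1) with h' | h'
    · have hts : s ≤ t := by omega
      have h1 : ¬ Rs π t := block_free π hp hR (by omega) (by omega)
      have h2 : ¬ Rs π (t+1) := block_free π hp hR (by omega) ht
      have h3 : t + 1 < n := by have := (qb_spec π hp hR).2.1; omega
      have := hA t h3 h1 h2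
      have := ih hts (by omega)
      omega
    · have : s = t + 1 := by omega
      rw [this]

lemma inc_mono (hA : IncB π) {p s t : ℕ} (hp : p < n) (hR : ¬ Rs π p)
    (hs : ab π p ≤ s) (hst : s ≤ t) (ht : t < qb π p) :
    permVal π s ≤ permVal π t := by
  induction t with
  | zero => have : s = 0 := by omega
            rw [this]
  | succ t ih =>
    rcases Nat.lt_or_ge s (t+1) with h' | h'
    · have hts : s ≤ t := by omega
      have h1 : ¬ Rs π t := block_free π hp hR (by omega) (by omega)
      have h2 : ¬ Rs π (t+1) := block_free π hp hR (by omega) ht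
      have h3 : t + 1 < n := by have := (qb_spec π hp hR).2.1; omega
      have := hA t h3 h1 h2
      have := ih hts (by omega)
      omega
    · have : s = t + 1 := by omega
      rw [this]

/-- for consecutive non-R positions, rho shifts by one. -/
lemma rho_adj {p : ℕ} (hp : p + 1 < n) (hR : ¬ Rs π p) (hR1 : ¬ Rs π (p+1)) :
    rho π (p+1) + 1 = rho π p ∧ ab π p ≤ rho π (p+1) ∧ rho π p < qb π p := by
  obtain ⟨hq1, hq2, hq3⟩ := qb_spec π (by omega) hR
  have ha := ab_le π (show p < n by omega) hR
  have hqne : qb π p ≠ p + 1 := fun h => hR1 (h ▸ hq3)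
  have hq4 : p + 2 ≤ qb π p := by omega
  have hqs : qb π (p+1) = qb π p := qb_stable π (by omega) hR (by omega) (by omega)
  have has : ab π (p+1) = ab π p := ab_stable π (by omega) hR (by omega) (by omega)
  rw [rho_of_block π (by omega) hR, rho_of_block π (by omega) hR1, hqs, has]
  omega

lemma IncB_phi (hA : DecB π) : IncB (phi π) := by
  intro p hp hRφ hRφ1
  have hR : ¬ Rs π p := fun h => hRφ ((Rs_phi π (by omega)).mpr h)
  have hR1 : ¬ Rs π (p+1) := fun h => hRφ1 ((Rs_phi π (by omega)).mpr h)
  obtain ⟨h1, h2, h3⟩ := rho_adj π hp hR hR1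
  rw [permVal_phi π (by omega), permVal_phi π (by omega)]
  have hs : ¬ Rs π (rho π (p+1)) := block_free π (by omega) hR h2 (by omega)
  have ht : ¬ Rs π (rho π p) := block_free π (by omega) hR (by omega) h3
  have hn2 : rho π (p+1) + 1 < n := by
    have := (qb_spec π (show p < n by omega) hR).2.1; omega
  have := hA (rho π (p+1)) hn2 hs (by rwa [h1])
  rw [h1] at this
  omega

lemma DecB_phi (hA : IncB π) : DecB (phi π) := by
  intro p hp hRφ hRφ1
  have hR : ¬ Rs π p := fun h => hRφ ((Rs_phi π (by omega)).mpr h)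
  have hR1 : ¬ Rs π (p+1) := fun h => hRφ1 ((Rs_phi π (by omega)).mpr h)
  obtain ⟨h1, h2, h3⟩ := rho_adj π hp hR hR1
  rw [permVal_phi π (by omega), permVal_phi π (by omega)]
  have hs : ¬ Rs π (rho π (p+1)) := block_free π (by omega) hR h2 (by omega)
  have ht : ¬ Rs π (rho π p) := block_free π (by omega) hR (by omega) h3
  have hn2 : rho π (p+1) + 1 < n := by
    have := (qb_spec π (show p < n by omega) hR).2.1; omega
  have := hA (rho π (p+1)) hn2 hs (by rwa [h1])
  rw [h1] at this
  omega

end avoidance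

section occpres

variable (τ : Equiv.Perm (Fin n))

lemma rho_gt {q j : ℕ} (hq : Rs τ q) (hj : j < n) (h : q < j) : q < rho τ j := by
  by_cases hRj : Rs τ j
  · rw [rho_of_Rs τ hRj]; exact h
  · obtain ⟨ha, _⟩ := rho_mem_block τ hj hRj
    have : q < ab τ j := by
      by_contra hle
      push_neg at hle
      exact ab_spec τ hj hRj hle (le_of_lt h) hq
    omega

/-- structure of a 13-2 occurrence in a block-increasing permutation -/
lemma sigma_occ (hI : IncB τ) {i j : ℕ} (hi : i < n) (hj : j < n)
    (h1 : i + 1 < j) (h2 : permVal τ i < permVal τ j)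
    (h3 : permVal τ j < permVal τ (i+1)) :
    ¬ Rs τ i ∧ qb τ i < j ∧ permVal τ (ab τ i) < permVal τ j ∧
      permVal τ j < permVal τ (qb τ i) := by
  have hRi : ¬ Rs τ i := by
    rw [not_Rs_iff τ hi]; exact ⟨j, hj, by omega, h2⟩
  obtain ⟨hq1, hq2, hq3⟩ := qb_spec τ hi hRi
  have ha := ab_le τ hi hRi
  have hqj : qb τ i < j := by
    rcases lt_trichotomy j (qb τ i) with h | h | h
    · have := inc_mono τ hI hi hRi (s := i+1) (t := j) (by omega) (by omega) h
      omega
    · -- j = qb τ i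
      rcases Nat.lt_or_ge (i+1) (qb τ i) with h' | h'
      · have hR1 : ¬ Rs τ (i+1) := qb_min τ hi hRi (by omega) h'
        have hqs : qb τ (i+1) = qb τ i := qb_stable τ hi hRi (by omega) h'
        have := blockLtQ τ (by omega) hR1
        rw [hqs, ← h] at this
        omega
      · have : (i+1 : ℕ) = j := by omega
        rw [this] at h3; omega
    · exact h
  refine ⟨hRi, hqj, ?_, ?_⟩
  · have := inc_mono τ hI hi hRi (s := ab τ i) (t := i) le_rfl ha hq1
    omega
  · rcases Nat.lt_or_ge (i+1) (qb τ i) with h' | h'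
    · have h5 : permVal τ (i+1) ≤ permVal τ (qb τ i - 1) :=
        inc_mono τ hI hi hRi (by omega) (by omega) (by omega)
      have hR1 : ¬ Rs τ (qb τ i - 1) := qb_min τ hi hRi (by omega) (by omega)
      have hqs : qb τ (qb τ i - 1) = qb τ i := qb_stable τ hi hRi (by omega) (by omega)
      have := blockLtQ τ (by omega) hR1
      rw [hqs] at this
      omega
    · have : (i+1 : ℕ) = qb τ i := by omega
      rw [this] at h3; exact h3

end occpres

section mainlemma

variable (π : Equiv.Perm (Fin n))

lemma occ13_2_phi (hA : DecB π) : occ13_2 (phi π) = occ13_2 π := by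
  have hI : IncB (phi π) := IncB_phi π hA
  unfold occ13_2
  apply Finset.card_bij (fun p _ => (qb π p.1 - 1, rho π p.2))
  · -- maps into target
    rintro ⟨i, j⟩ hmem
    simp only [Finset.mem_filter, Finset.mem_product, Finset.mem_range] at hmem ⊢
    obtain ⟨⟨hi, hj⟩, h1, h2, h3⟩ := hmem
    obtain ⟨hRi, hqj, hv1, hv2⟩ := sigma_occ (phi π) hI hi hj h1 h2 h3
    rw [qb_phi π i] at hqj hv2
    rw [ab_phi π hi] at hv1
    have hRi' : ¬ Rs π i := fun h => hRi ((Rs_phi π hi).mpr h)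
    obtain ⟨hq1, hq2, hq3⟩ := qb_spec π hi hRi'
    have ha := ab_le π hi hRi'
    -- rho π j > qb π i
    have hrj : qb π i < rho π j := rho_gt π hq3 hj hqj
    have hrjn : rho π j < n := rho_lt π hj
    -- value translations
    have hvj : permVal (phi π) j = permVal π (rho π j) := permVal_phi π hj
    have hvq : permVal (phi π) (qb π i) = permVal π (qb π i) := by
      rw [permVal_phi π hq2, rho_of_Rs π hq3]
    -- permVal π (qb π i - 1) = permVal (phi π) (ab π i)
    have hRa : ¬ Rs π (ab π i) := ab_spec π hi hRi' le_rfl ha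
    have hqa : qb π (ab π i) = qb π i := qb_stable π hi hRi' le_rfl (by omega)
    have haa : ab π (ab π i) = ab π i := ab_stable π hi hRi' le_rfl (by omega)
    have hva : permVal (phi π) (ab π i) = permVal π (qb π i - 1) := by
      rw [permVal_phi π (by omega), rho_of_block π (by omega) hRa, hqa, haa]
      congr 1
      omega
    refine ⟨⟨by omega, by omega⟩, by omega, ?_, ?_⟩
    · -- permVal π (qb π i - 1) < permVal π (rho π j)
      rw [← hva, ← hvj]; exact hv1
    · -- permVal π (rho π j) < permVal π (qb π i - 1 + 1)
      have : qb π i - 1 + 1 = qb π i := by omega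
      rw [this, ← hvj, ← hvq]; exact hv2
  · -- injective
    rintro ⟨i, j⟩ hm ⟨i', j'⟩ hm' heq
    simp only [Finset.mem_filter, Finset.mem_product, Finset.mem_range] at hm hm'
    obtain ⟨⟨hi, hj⟩, h1, h2, h3⟩ := hm
    obtain ⟨⟨hi', hj'⟩, h1', h2', h3'⟩ := hm'
    simp only [Prod.mk.injEq] at heq
    obtain ⟨heq1, heq2⟩ := heq
    have hjj : j = j' := by
      have := congrArg (rho π) heq2
      rwa [rho_invol, rho_invol] at this
    subst hjj
    obtain ⟨hRi, hqj, _, _⟩ := sigma_occ (phi π) hI hi hj h1 h2 h3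
    obtain ⟨hRi', hqj', _, _⟩ := sigma_occ (phi π) hI hi' hj h1' h2' h3'
    have hq0 : 0 < qb (phi π) i := by
      have := (qb_spec (phi π) hi hRi).1; omega
    have hq0' : 0 < qb (phi π) i' := by
      have := (qb_spec (phi π) hi' hRi').1; omega
    rw [qb_phi π i, qb_phi π i'] at *
    have hqq : qb π i = qb π i' := by omega
    have hRπi : ¬ Rs π i := fun h => hRi ((Rs_phi π hi).mpr h)
    have hRπi' : ¬ Rs π i' := fun h => hRi' ((Rs_phi π hi').mpr h)
    -- i' is in the block of i
    have key : ∀ a b : ℕ, a < n → b < n → ¬ Rs π a → ¬ Rs π b → qb π a = qb π b →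
        a + 1 < j → b + 1 < j →
        permVal (phi π) a < permVal (phi π) j →
        permVal (phi π) j < permVal (phi π) (a+1) →
        permVal (phi π) b < permVal (phi π) j →
        permVal (phi π) j < permVal (phi π) (b+1) → a < b → False := by
      intro a b hna hnb hRa hRb hq hja hjb hva hva1 hvb hvb1 hab
      -- b in block of a
      have hbq : b < qb π a := by rw [hq]; exact (qb_spec π hnb hRb).1
      have haa' := ab_le π hna hRa
      have hqa' := (qb_spec π hna hRa).1
      have hba : ab π a ≤ b := by
        by_contra hlt
        push_neg at hlt
        have hpos : 0 < ab π a := by omega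
        have hRs := ab_pred π hna hRa hpos
        rcases Nat.lt_or_ge b (ab π a - 1) with h' | h'
        · exact qb_min π hnb hRb (by omega) (by omega) hRs
        · have : b = ab π a - 1 := by omega
          rw [← this] at hRs
          exact hRb hRs
      -- phi π is increasing on block of a (= block of phi π at a)
      have hRφa : ¬ Rs (phi π) a := fun h => hRa ((Rs_phi π hna).mp h)
      have hmono := inc_mono (phi π) hI hna hRφa (s := a+1) (t := b)
        (by rw [ab_phi π hna]; have := ab_le π hna hRa; omega)
        (by omega) (by rw [qb_phi π a]; exact hbq)
      omega
    rcases lt_trichotomy i i' with h | h | h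
    · exact absurd (key i i' hi hi' hRπi hRπi' hqq h1 h1' h2 h3 h2' h3' h) (fun f => f)
    · rw [h]
    · exact absurd (key i' i hi' hi hRπi' hRπi hqq.symm h1' h1 h2' h3' h2 h3 h) (fun f => f)
  · -- surjective
    rintro ⟨x, y⟩ hmem
    simp only [Finset.mem_filter, Finset.mem_product, Finset.mem_range] at hmem
    obtain ⟨⟨hx, hy⟩, h1, h2, h3⟩ := hmem
    have hRx : ¬ Rs π x := by
      rw [not_Rs_iff π hx]; exact ⟨y, hy, by omega, h2⟩
    have hRx1 : Rs π (x+1) := by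
      by_contra hR1
      have := hA x (by omega) hRx hR1
      omega
    have hq : qb π x = x + 1 := by
      apply le_antisymm
      · exact Nat.sInf_le ⟨by omega, by omega, hRx1⟩
      · have := (qb_spec π hx hRx).1; omega
    have ha := ab_le π hx hRx
    set a := ab π x with ha_def
    set j := rho π y with hj_def
    have hjgt : x + 1 < j := rho_gt π hRx1 hy h1
    have hjn : j < n := rho_lt π hy
    have hvj : permVal (phi π) j = permVal π y := by
      rw [permVal_phi π hjn, hj_def, rho_invol]
    -- value at a in phi π is permVal π x
    have hax : a < qb π x := by rw [hq]; omega
    have hRa : ¬ Rs π a := ab_spec π hx hRx le_rfl ha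
    have hqa : qb π a = x + 1 := by rw [qb_stable π hx hRx le_rfl hax, hq]
    have haa : ab π a = a := ab_stable π hx hRx le_rfl hax
    have hva : permVal (phi π) a = permVal π x := by
      rw [permVal_phi π (by omega), rho_of_block π (by omega) hRa, hqa, haa]
      congr 1
      omega
    -- pick the largest position i in [a, x] with value < permVal π y
    have hSne : a ∈ (Finset.range (x+1)).filter
        (fun t => a ≤ t ∧ permVal (phi π) t < permVal π y) := by
      simp only [Finset.mem_filter, Finset.mem_range]
      exact ⟨by omega, le_rfl, by rw [hva]; omega⟩
    set S := (Finset.range (x+1)).filter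
        (fun t => a ≤ t ∧ permVal (phi π) t < permVal π y) with hS_def
    have hSne' : S.Nonempty := ⟨a, hSne⟩
    set i := S.max' hSne' with hi_def
    have hiS : i ∈ S := S.max'_mem hSne'
    simp only [hS_def, Finset.mem_filter, Finset.mem_range] at hiS
    obtain ⟨hix, hai, hvi⟩ := hiS
    have hmax : ∀ t ∈ S, t ≤ i := fun t ht => S.le_max' t ht
    -- key : permVal π y < permVal (phi π) (i+1)
    have hkey : permVal π y < permVal (phi π) (i+1) := by
      rcases Nat.lt_or_ge i x with h' | h'
      · -- i < x, so i+1 ≤ x in the block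
        have hRii : ¬ Rs π (i+1) := block_free π hx hRx (by omega) (by omega)
        have hne : permVal (phi π) (i+1) ≠ permVal π y := by
          intro he
          rw [permVal_phi π (by omega)] at he
          have hr1n : rho π (i+1) < n := rho_lt π (by omega)
          have := permVal_inj π hr1n hy he
          obtain ⟨hb1, hb2⟩ := rho_mem_block π (show i+1 < n by omega) hRii
          rw [qb_stable π hx hRx (by omega) (by omega), hq] at hb2
          omega
        rcases Nat.lt_or_ge (permVal (phi π) (i+1)) (permVal π y) with h'' | h''
        · have : (i+1) ∈ S := by
            simp only [hS_def, Finset.mem_filter, Finset.mem_range]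
            exact ⟨by omega, by omega, h''⟩
          have := hmax _ this
          omega
        · omega
      · have hix' : i = x := by omega
        rw [hix', permVal_phi π (by omega), rho_of_Rs π hRx1]
        omega
    refine ⟨(i, j), ?_, ?_⟩
    · simp only [Finset.mem_filter, Finset.mem_product, Finset.mem_range]
      refine ⟨⟨by omega, hjn⟩, by omega, ?_, ?_⟩
      · rw [hvj]; exact hvi
      · rw [hvj]; exact hkey
    · simp only [Prod.mk.injEq]
      constructor
      · have hst := qb_stable π hx hRx hai (by rw [hq]; omega)
        rw [hst, hq]
        omega
      · rw [hj_def, rho_invol]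

end mainlemma

end Stmt17

open Stmt17 in
theorem stmt17 (r n : ℕ) :
    (Finset.univ.filter (fun π : Equiv.Perm (Fin n) =>
      occ12_3 π = 0 ∧ occ13_2 π = r)).card =
    (Finset.univ.filter (fun π : Equiv.Perm (Fin n) =>
      occ21_3 π = 0 ∧ occ13_2 π = r)).card := by
  apply Finset.card_bij (fun π _ => phi π)
  · intro π hπ
    simp only [Finset.mem_filter, Finset.mem_univ, true_and] at hπ ⊢
    obtain ⟨h12, h13⟩ := hπ
    have hD : DecB π := (occ12_3_zero_iff π).mp h12
    constructor
    · exact (occ21_3_zero_iff (phi π)).mpr (IncB_phi π hD)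
    · rw [occ13_2_phi π hD, h13]
  · intro π₁ h₁ π₂ h₂ heq
    have : phi (phi π₁) = phi (phi π₂) := congrArg phi heq
    rwa [phi_invol, phi_invol] at this
  · intro σ hσ
    simp only [Finset.mem_filter, Finset.mem_univ, true_and] at hσ
    obtain ⟨h21, h13⟩ := hσ
    have hI : IncB σ := (occ21_3_zero_iff σ).mp h21
    have hD : DecB (phi σ) := DecB_phi σ hI
    refine ⟨phi σ, ?_, phi_invol σ⟩
    simp only [Finset.mem_filter, Finset.mem_univ, true_and]
    constructor
    · exact (occ12_3_zero_iff (phi σ)).mpr hD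
    · have := occ13_2_phi (phi σ) hD
      rw [phi_invol σ] at this
      rw [← this, h13]
end

section
/- For every n ≥ 0, the number of permutations of {1,...,n} avoiding all three generalized patterns 12-3, 13-2, and 21-3 equals the (n+1)-st Fibonacci number (with F(1) = F(2) = 1). -/
/-- The "staircase" condition equivalent to avoiding 12-3, 13-2, 21-3. -/
def Pavoid {n : ℕ} (π : Equiv.Perm (Fin n)) : Prop :=
  ∀ i < n, ∀ j < n, i + 2 ≤ j → permVal π j < permVal π i

instance {n : ℕ} : DecidablePred (Pavoid (n := n)) := fun π => by
  unfold Pavoid; infer_instance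

lemma permVal_lt {n : ℕ} (π : Equiv.Perm (Fin n)) {i : ℕ} (h : i < n) :
    permVal π i < n := by
  simp only [permVal, dif_pos h]
  exact (π ⟨i, h⟩).isLt

lemma permVal_inj {n : ℕ} (π : Equiv.Perm (Fin n)) {i j : ℕ} (hi : i < n) (hj : j < n)
    (h : permVal π i = permVal π j) : i = j := by
  simp only [permVal, dif_pos hi, dif_pos hj] at h
  have := π.injective (Fin.val_injective h)
  simpa [Fin.ext_iff] using this

/-- Extend a permutation by putting the new largest value at position 0. -/
def Eext {m : ℕ} (σ : Equiv.Perm (Fin m)) : Equiv.Perm (Fin (m + 1)) :=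
  ((finSuccEquiv m).trans σ.optionCongr).trans finSuccEquivLast.symm

lemma Eext_zero {m : ℕ} (σ : Equiv.Perm (Fin m)) : Eext σ 0 = Fin.last m := by
  simp [Eext]

lemma Eext_succ {m : ℕ} (σ : Equiv.Perm (Fin m)) (i : Fin m) :
    Eext σ i.succ = (σ i).castSucc := by
  simp [Eext]

lemma permVal_Eext_zero {m : ℕ} (σ : Equiv.Perm (Fin m)) : permVal (Eext σ) 0 = m := by
  simp only [permVal, dif_pos (Nat.succ_pos m)]
  have : (⟨0, Nat.succ_pos m⟩ : Fin (m+1)) = 0 := rfl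
  rw [this, Eext_zero]
  simp [Fin.last]

lemma permVal_Eext_succ {m : ℕ} (σ : Equiv.Perm (Fin m)) (i : ℕ) :
    permVal (Eext σ) (i + 1) = permVal σ i := by
  by_cases h : i < m
  · have h' : i + 1 < m + 1 := by omega
    simp only [permVal, dif_pos h, dif_pos h']
    have : (⟨i + 1, h'⟩ : Fin (m+1)) = (⟨i, h⟩ : Fin m).succ := rfl
    rw [this, Eext_succ]
    simp
  · have h' : ¬ (i + 1 < m + 1) := by omega
    simp only [permVal, dif_neg h, dif_neg h']

lemma Pavoid_Eext {m : ℕ} (σ : Equiv.Perm (Fin m)) : Pavoid (Eext σ) ↔ Pavoid σ := by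
  constructor
  · intro h i hi j hj hij
    have := h (i + 1) (by omega) (j + 1) (by omega) (by omega)
    rwa [permVal_Eext_succ, permVal_Eext_succ] at this
  · intro h i hi j hj hij
    match j, i with
    | (j' + 1), 0 =>
        rw [permVal_Eext_zero, permVal_Eext_succ]
        exact permVal_lt σ (by omega)
    | (j' + 1), (i' + 1) =>
        rw [permVal_Eext_succ, permVal_Eext_succ]
        exact h i' (by omega) j' (by omega) (by omega)

lemma Eext_injective {m : ℕ} : Function.Injective (Eext (m := m)) := by
  intro σ τ h
  ext i
  have := congrArg (fun π => permVal π ((i : ℕ) + 1)) h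
  simp only [permVal_Eext_succ] at this
  simpa [permVal, i.isLt] using this

/-- Inverse of `Eext` (meaningful when `π 0 = Fin.last m`). -/
def Dres {m : ℕ} (π : Equiv.Perm (Fin (m + 1))) : Equiv.Perm (Fin m) :=
  Equiv.removeNone (((finSuccEquiv m).symm.trans π).trans finSuccEquivLast)

lemma Eext_Dres {m : ℕ} (π : Equiv.Perm (Fin (m + 1))) (h : π 0 = Fin.last m) :
    Eext (Dres π) = π := by
  set e := (((finSuccEquiv m).symm.trans π).trans finSuccEquivLast) with he
  ext x
  induction x using Fin.cases with
  | zero => rw [Eext_zero, h]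
  | succ i =>
      rw [Eext_succ]
      -- π i.succ ≠ last, so it's a castSucc
      have hne : π i.succ ≠ Fin.last m := by
        intro hc
        have : i.succ = (0 : Fin (m+1)) := π.injective (hc.trans h.symm)
        exact (Fin.succ_ne_zero i) this
      obtain ⟨b, hb⟩ : ∃ b, π i.succ = Fin.castSucc b := by
        rcases Fin.eq_castSucc_or_eq_last (π i.succ) with ⟨b, hb⟩ | hl
        · exact ⟨b, hb⟩
        · exact absurd hl hne
      have hsome : e (some i) = some b := by
        simp [he, hb]
      have := Equiv.removeNone_some (e := e) ⟨b, hsome⟩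
      rw [hsome] at this
      have hD : Equiv.removeNone e i = b := Option.some_injective _ this
      have hD' : Dres π i = b := by rw [Dres, ← he]; exact hD
      rw [hD', hb]

/-- Extend by putting second-largest at position 0 and largest at position 1. -/
def E2 {m : ℕ} (σ : Equiv.Perm (Fin m)) : Equiv.Perm (Fin (m + 2)) :=
  (Equiv.swap 0 1).trans (Eext (Eext σ))

lemma permVal_E2_zero {m : ℕ} (σ : Equiv.Perm (Fin m)) : permVal (E2 σ) 0 = m := by
  have h0 : (0 : ℕ) < m + 2 := by omega
  simp only [permVal, dif_pos h0]
  have : (⟨0, h0⟩ : Fin (m+2)) = 0 := rfl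
  rw [this]
  show ((Eext (Eext σ)) (Equiv.swap 0 1 0) : ℕ) = m
  rw [Equiv.swap_apply_left]
  have h1 : (1 : Fin (m+2)) = (0 : Fin (m+1)).succ := rfl
  rw [h1, Eext_succ, Eext_zero]
  simp [Fin.last]

lemma permVal_E2_one {m : ℕ} (σ : Equiv.Perm (Fin m)) : permVal (E2 σ) 1 = m + 1 := by
  have h1 : (1 : ℕ) < m + 2 := by omega
  simp only [permVal, dif_pos h1]
  have : (⟨1, h1⟩ : Fin (m+2)) = 1 := rfl
  rw [this]
  show ((Eext (Eext σ)) (Equiv.swap 0 1 1) : ℕ) = m + 1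
  rw [Equiv.swap_apply_right, Eext_zero]
  simp [Fin.last]

lemma permVal_E2_add_two {m : ℕ} (σ : Equiv.Perm (Fin m)) (i : ℕ) :
    permVal (E2 σ) (i + 2) = permVal σ i := by
  by_cases h : i < m
  · have h' : i + 2 < m + 2 := by omega
    simp only [permVal, dif_pos h, dif_pos h']
    show ((Eext (Eext σ)) (Equiv.swap 0 1 ⟨i+2, h'⟩) : ℕ) = _
    rw [Equiv.swap_apply_of_ne_of_ne (by simp [Fin.ext_iff]) (by simp [Fin.ext_iff])]
    have e1 : (⟨i+2, h'⟩ : Fin (m+2)) = (⟨i+1, by omega⟩ : Fin (m+1)).succ := rfl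
    rw [e1, Eext_succ]
    have e2 : (⟨i+1, by omega⟩ : Fin (m+1)) = (⟨i, h⟩ : Fin m).succ := rfl
    rw [e2, Eext_succ]
    simp
  · have h' : ¬ (i + 2 < m + 2) := by omega
    simp only [permVal, dif_neg h, dif_neg h']

lemma Pavoid_E2 {m : ℕ} (σ : Equiv.Perm (Fin m)) : Pavoid (E2 σ) ↔ Pavoid σ := by
  constructor
  · intro h i hi j hj hij
    have := h (i + 2) (by omega) (j + 2) (by omega) (by omega)
    rwa [permVal_E2_add_two, permVal_E2_add_two] at this
  · intro h i hi j hj hij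
    match j, i with
    | (j' + 2), 0 =>
        rw [permVal_E2_zero, permVal_E2_add_two]
        exact permVal_lt σ (by omega)
    | (j' + 2), 1 =>
        rw [permVal_E2_one, permVal_E2_add_two]
        have := permVal_lt σ (show j' < m by omega)
        omega
    | (j' + 2), (i' + 2) =>
        rw [permVal_E2_add_two, permVal_E2_add_two]
        exact h i' (by omega) j' (by omega) (by omega)

lemma E2_injective {m : ℕ} : Function.Injective (E2 (m := m)) := by
  intro σ τ h
  ext i
  have := congrArg (fun π => permVal π ((i : ℕ) + 2)) h
  simp only [permVal_E2_add_two] at this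
  simpa [permVal, i.isLt] using this

lemma permVal_eq_val {n : ℕ} (π : Equiv.Perm (Fin n)) (i : Fin n) :
    permVal π (i : ℕ) = (π i : ℕ) := by
  simp [permVal, i.isLt]

lemma exists_Eext {m : ℕ} (π : Equiv.Perm (Fin (m + 2))) (hP : Pavoid π)
    (h0 : π 0 = Fin.last (m + 1)) : ∃ σ, Pavoid σ ∧ Eext σ = π := by
  refine ⟨Dres π, ?_, Eext_Dres π h0⟩
  rw [← Pavoid_Eext, Eext_Dres π h0]; exact hP

lemma exists_E2 {m : ℕ} (π : Equiv.Perm (Fin (m + 2))) (hP : Pavoid π)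
    (h0 : π 0 ≠ Fin.last (m + 1)) : ∃ σ, Pavoid σ ∧ E2 σ = π := by
  -- step 1 : π 1 = last
  have hπ1 : π 1 = Fin.last (m + 1) := by
    set j := π.symm (Fin.last (m + 1)) with hj
    have hπj : π j = Fin.last (m + 1) := π.apply_symm_apply _
    have hj0 : j ≠ 0 := fun hc => h0 (by rw [← hπj, hc])
    have hjlt : (j : ℕ) < 2 := by
      by_contra hge
      have := hP 0 (by omega) (j : ℕ) j.isLt (by omega)
      have e1 : permVal π (j : ℕ) = m + 1 := by
        rw [permVal_eq_val, hπj]; rfl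
      have e2 : permVal π 0 < m + 2 := permVal_lt π (by omega)
      omega
    have : j = 1 := by
      have hj0' : (j : ℕ) ≠ 0 := fun hc => hj0 (Fin.ext hc)
      have e1 : ((1 : Fin (m+2)) : ℕ) = 1 := rfl
      exact Fin.ext (by omega)
    rw [← this, hπj]
  -- step 2 : π 0 = m
  have hπ0 : π 0 = Fin.castSucc (Fin.last m) := by
    set k := π.symm (Fin.castSucc (Fin.last m)) with hk
    have hπk : π k = Fin.castSucc (Fin.last m) := π.apply_symm_apply _
    have hk1 : k ≠ 1 := by
      intro hc
      rw [hc, hπ1] at hπk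
      exact absurd (congrArg Fin.val hπk) (by simp [Fin.last])
    have hπ0lt : (π 0 : ℕ) < m + 1 := by
      have := (π 0).isLt
      have hne : (π 0 : ℕ) ≠ m + 1 := fun hc => h0 (Fin.ext hc)
      omega
    have hklt : (k : ℕ) < 2 := by
      by_contra hge
      have := hP 0 (by omega) (k : ℕ) k.isLt (by omega)
      have e1 : permVal π (k : ℕ) = m := by
        rw [permVal_eq_val, hπk]; simp [Fin.last]
      have e2 : permVal π 0 = (π 0 : ℕ) := by
        have h0' : (0:ℕ) < m + 2 := by omega
        simp only [permVal, dif_pos h0']; rfl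
      omega
    have : k = 0 := by
      have hk1' : (k : ℕ) ≠ (1 : Fin (m+2)) := fun hc => hk1 (Fin.ext hc)
      have e1 : ((1 : Fin (m+2)) : ℕ) = 1 := rfl
      have e0 : ((0 : Fin (m+2)) : ℕ) = 0 := rfl
      exact Fin.ext (by omega)
    rw [← this, hπk]
  -- step 3 : build σ
  set ρ := (Equiv.swap (0 : Fin (m+2)) 1).trans π with hρ
  have hρ0 : ρ 0 = Fin.last (m + 1) := by
    show π (Equiv.swap 0 1 0) = _
    rw [Equiv.swap_apply_left, hπ1]
  have hEρ : Eext (Dres ρ) = ρ := Eext_Dres ρ hρ0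
  set τ := Dres ρ with hτ
  have hτ0 : τ 0 = Fin.last m := by
    have h1 : ρ 1 = Fin.castSucc (Fin.last m) := by
      show π (Equiv.swap 0 1 1) = _
      rw [Equiv.swap_apply_right, hπ0]
    have h2 : Eext τ 1 = Fin.castSucc (τ 0) := by
      have : (1 : Fin (m+2)) = (0 : Fin (m+1)).succ := rfl
      rw [this, Eext_succ]
    rw [hEρ, h1] at h2
    exact Fin.castSucc_injective _ h2.symm
  have hEτ : Eext (Dres τ) = τ := Eext_Dres τ hτ0
  have hE2 : E2 (Dres τ) = π := by
    show (Equiv.swap (0 : Fin (m+2)) 1).trans (Eext (Eext (Dres τ))) = π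
    rw [hEτ, hEρ, hρ]
    ext x
    simp [Equiv.swap_apply_self]
  refine ⟨Dres τ, (Pavoid_E2 (Dres τ)).mp ?_, hE2⟩
  rw [hE2]; exact hP

lemma Scard : ∀ n : ℕ,
    (Finset.univ.filter (fun π : Equiv.Perm (Fin n) => Pavoid π)).card = Nat.fib (n + 1) := by
  intro n
  induction n using Nat.strong_induction_on with
  | _ n ih =>
    match n with
    | 0 =>
        rw [Finset.filter_true_of_mem (fun π _ => by intro i hi j hj hij; omega)]
        simp [Finset.card_univ]
    | 1 =>
        rw [Finset.filter_true_of_mem (fun π _ => by intro i hi j hj hij; omega)]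
        simp [Finset.card_univ]
    | (m + 2) =>
        set S := (Finset.univ.filter (fun π : Equiv.Perm (Fin (m+2)) => Pavoid π)) with hS
        have hsplit := Finset.card_filter_add_card_filter_not
          (s := S) (p := fun π => π 0 = Fin.last (m + 1))
        have hT1 : S.filter (fun π => π 0 = Fin.last (m + 1)) =
            (Finset.univ.filter (fun σ : Equiv.Perm (Fin (m+1)) => Pavoid σ)).image Eext := by
          ext π
          simp only [hS, Finset.mem_filter, Finset.mem_image, Finset.mem_univ, true_and,
            Finset.filter_filter]
          constructor
          · rintro ⟨hP, h0⟩
            obtain ⟨σ, hσ, hEσ⟩ := exists_Eext π hP h0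
            exact ⟨σ, hσ, hEσ⟩
          · rintro ⟨σ, hσ, rfl⟩
            exact ⟨(Pavoid_Eext σ).mpr hσ, Eext_zero σ⟩
        have hT2 : S.filter (fun π => ¬ π 0 = Fin.last (m + 1)) =
            (Finset.univ.filter (fun σ : Equiv.Perm (Fin m) => Pavoid σ)).image E2 := by
          ext π
          simp only [hS, Finset.mem_filter, Finset.mem_image, Finset.mem_univ, true_and,
            Finset.filter_filter]
          constructor
          · rintro ⟨hP, h0⟩
            obtain ⟨σ, hσ, hEσ⟩ := exists_E2 π hP h0
            exact ⟨σ, hσ, hEσ⟩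
          · rintro ⟨σ, hσ, rfl⟩
            refine ⟨(Pavoid_E2 σ).mpr hσ, ?_⟩
            intro hc
            have := congrArg Fin.val hc
            rw [show ((E2 σ 0 : Fin (m+2)) : ℕ) = permVal (E2 σ) 0 from
              (permVal_eq_val _ 0).symm, permVal_E2_zero] at this
            simp [Fin.last] at this
        rw [hT1, hT2, Finset.card_image_of_injective _ Eext_injective,
          Finset.card_image_of_injective _ E2_injective,
          ih (m+1) (by omega), ih m (by omega)] at hsplit
        rw [← hsplit]
        show Nat.fib (m+1+1) + Nat.fib (m+1) = Nat.fib (m+1+2)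
        conv_rhs => rw [Nat.fib_add_two]
        exact Nat.add_comm _ _

lemma avoid_iff {n : ℕ} (π : Equiv.Perm (Fin n)) :
    (occ12_3 π = 0 ∧ occ13_2 π = 0 ∧ occ21_3 π = 0) ↔ Pavoid π := by
  simp only [occ12_3, occ13_2, occ21_3, Finset.card_eq_zero,
    Finset.filter_eq_empty_iff, Finset.mem_product, Finset.mem_range, Prod.forall]
  constructor
  · rintro ⟨h12, h13, h21⟩ i hi j hj hij
    by_contra hge
    push_neg at hge
    have hi1 : i + 1 < n := by omega
    have hij' : i ≠ j := by omega
    have hac : permVal π i < permVal π j := by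
      rcases lt_or_eq_of_le hge with h | h
      · exact h
      · exact absurd (permVal_inj π hi hj h) hij'
    have hb1 : permVal π (i+1) ≠ permVal π i :=
      fun h => by have := permVal_inj π hi1 hi h; omega
    have hb2 : permVal π (i+1) ≠ permVal π j :=
      fun h => by have := permVal_inj π hi1 hj h; omega
    rcases lt_or_gt_of_ne hb1 with hba | hab
    · exact h21 i j ⟨hi, hj⟩ ⟨by omega, hba, hac⟩
    · rcases lt_or_gt_of_ne hb2 with hbc | hcb
      · exact h12 i j ⟨hi, hj⟩ ⟨by omega, hab, hbc⟩
      · exact h13 i j ⟨hi, hj⟩ ⟨by omega, hac, hcb⟩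
  · intro hP
    refine ⟨?_, ?_, ?_⟩ <;>
      · rintro i j ⟨hi, hj⟩ ⟨hij, h1, h2⟩
        have := hP i hi j hj (by omega)
        omega

theorem stmt18 (n : ℕ) :
    (Finset.univ.filter (fun π : Equiv.Perm (Fin n) =>
      occ12_3 π = 0 ∧ occ13_2 π = 0 ∧ occ21_3 π = 0)).card = Nat.fib (n + 1) := by
  rw [Finset.filter_congr (fun π _ => avoid_iff π)]
  exact Scard n
end
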